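/- arXiv:2210.16589 — 4 statements merged into one kernel-verified Lean document; each statement's English description precedes it below -/
import Mathlib

section
/- Let F = ∪_{j=1}^m I_j be a finite union of closed intervals contained in [-1/2,1/2], and let 0 < ε ≤ 1. Then there exists a measurable set S ⊆ [-1/2,1/2] \ F with μ(S) = min(ε, 1 - μ(F)) such that every point of S lies within distance ε of F. -/
open MeasureTheory ENNReal

/-- Any measurable subset of `[-1/2,1/2]` contains a measurable subset of any
prescribed smaller measure (intermediate value argument). -/
lemma exists_subset_volume_eq {T : Set ℝ} (hT : MeasurableSet T)
    (hsub : T ⊆ Set.Icc (-(1:ℝ)/2) (1/2)) (r : ℝ≥0∞) (hr : r ≤ volume T) :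
    ∃ S : Set ℝ, S ⊆ T ∧ MeasurableSet S ∧ volume S = r := by
  have hTfin : volume T ≠ ⊤ := by
    refine ((measure_mono hsub).trans_lt ?_).ne
    rw [Real.volume_Icc]; exact ENNReal.ofReal_lt_top
  have hrfin : r ≠ ⊤ := (hr.trans_lt hTfin.lt_top).ne
  have hfinx : ∀ x : ℝ, volume (T ∩ Set.Iic x) ≠ ⊤ := fun x =>
    ((measure_mono Set.inter_subset_left).trans_lt hTfin.lt_top).ne
  set f : ℝ → ℝ := fun x => (volume (T ∩ Set.Iic x)).toReal with hf
  have hmono : Monotone f := by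
    intro y x h
    exact (ENNReal.toReal_le_toReal (hfinx y) (hfinx x)).mpr
      (measure_mono (Set.inter_subset_inter_right _ (Set.Iic_subset_Iic.mpr h)))
  have hbd : ∀ {x y : ℝ}, y ≤ x → f x - f y ≤ x - y := by
    intro x y h
    have hsub2 : T ∩ Set.Iic x ⊆ (T ∩ Set.Iic y) ∪ Set.Ioc y x := by
      rintro z ⟨hzT, hzx⟩
      rcases le_or_gt z y with hz | hz
      · exact Or.inl ⟨hzT, hz⟩
      · exact Or.inr ⟨hz, hzx⟩
    have h1 : volume (T ∩ Set.Iic x) ≤ volume (T ∩ Set.Iic y) + ENNReal.ofReal (x - y) := by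
      calc volume (T ∩ Set.Iic x) ≤ volume ((T ∩ Set.Iic y) ∪ Set.Ioc y x) :=
            measure_mono hsub2
        _ ≤ volume (T ∩ Set.Iic y) + volume (Set.Ioc y x) := measure_union_le _ _
        _ = volume (T ∩ Set.Iic y) + ENNReal.ofReal (x - y) := by rw [Real.volume_Ioc]
    have h2 : f x ≤ f y + (x - y) := by
      have := (ENNReal.toReal_le_toReal (hfinx x)
        (by exact ENNReal.add_ne_top.mpr ⟨hfinx y, ENNReal.ofReal_ne_top⟩)).mpr h1
      rwa [ENNReal.toReal_add (hfinx y) ENNReal.ofReal_ne_top,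
        ENNReal.toReal_ofReal (sub_nonneg.mpr h)] at this
    linarith
  have hlip : LipschitzWith 1 f := by
    refine LipschitzWith.of_dist_le_mul fun x y => ?_
    rw [Real.dist_eq, Real.dist_eq, NNReal.coe_one, one_mul]
    rcases le_total y x with h | h
    · rw [abs_of_nonneg (sub_nonneg.mpr (hmono h)), abs_of_nonneg (sub_nonneg.mpr h)]
      exact hbd h
    · rw [abs_of_nonpos (sub_nonpos.mpr (hmono h)), abs_of_nonpos (sub_nonpos.mpr h)]
      have := hbd h; linarith
  have hf0 : f (-(1:ℝ)/2) = 0 := by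
    have h0 : volume (T ∩ Set.Iic (-(1:ℝ)/2)) = 0 := by
      refine measure_mono_null (fun z hz => ?_)
        (Real.volume_singleton : volume {(-(1:ℝ)/2)} = 0)
      exact le_antisymm hz.2 (hsub hz.1).1
    simp [hf, h0]
  have hfhalf : f (1/2 : ℝ) = (volume T).toReal := by
    have h2 : T ∩ Set.Iic (1/2 : ℝ) = T :=
      Set.inter_eq_left.mpr fun z hz => (hsub hz).2
    show (volume (T ∩ Set.Iic (1/2 : ℝ))).toReal = _
    rw [h2]
  have hrle : r.toReal ≤ (volume T).toReal :=
    (ENNReal.toReal_le_toReal hrfin hTfin).mpr hr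
  have hmem : r.toReal ∈ Set.Icc (f (-(1:ℝ)/2)) (f (1/2 : ℝ)) := by
    constructor
    · rw [hf0]; exact ENNReal.toReal_nonneg
    · rw [hfhalf]; exact hrle
  obtain ⟨x, -, hx⟩ := intermediate_value_Icc (by norm_num : (-(1:ℝ)/2) ≤ 1/2)
    hlip.continuous.continuousOn hmem
  exact ⟨T ∩ Set.Iic x, Set.inter_subset_left, hT.inter measurableSet_Iic,
    (ENNReal.toReal_eq_toReal_iff' (hfinx x) hrfin).mp hx⟩

/-- For a finite union `F = ⋃_{j<m} [a j, b j]` of closed intervals contained in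
`[-1/2,1/2]` and `0 < ε ≤ 1`, there exists a measurable set `S ⊆ [-1/2,1/2] \ F` with
`μ(S) = min(ε, 1 - μ(F))` such that every point of `S` lies within distance `ε` of `F`. -/
theorem eps_extension_finite_union (m : ℕ) (a b : Fin m → ℝ) (ε : ℝ)
    (hab : ∀ j, a j ≤ b j)
    (hsub : ∀ j, Set.Icc (a j) (b j) ⊆ Set.Icc (-(1:ℝ)/2) (1/2))
    (hε : 0 < ε) (hε1 : ε ≤ 1) :
    ∃ S : Set ℝ, MeasurableSet S ∧
      S ⊆ Set.Icc (-(1:ℝ)/2) (1/2) \ (⋃ j, Set.Icc (a j) (b j)) ∧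
      (∀ s ∈ S, Metric.infDist s (⋃ j, Set.Icc (a j) (b j)) ≤ ε) ∧
      volume S = min (ENNReal.ofReal ε) (1 - volume (⋃ j, Set.Icc (a j) (b j))) := by
  set F : Set ℝ := ⋃ j, Set.Icc (a j) (b j) with hF
  set box : Set ℝ := Set.Icc (-(1:ℝ)/2) (1/2) with hbox
  have hFcp : IsCompact F := isCompact_iUnion fun j => isCompact_Icc
  have hFm : MeasurableSet F := hFcp.isClosed.measurableSet
  have hFsub : F ⊆ box := Set.iUnion_subset hsub
  have hboxvol : volume box = 1 := by
    rw [hbox, Real.volume_Icc]; norm_num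
  have hFfin : volume F ≠ ⊤ := by
    rw [← lt_top_iff_ne_top]
    exact (measure_mono hFsub).trans_lt (by rw [hboxvol]; exact ENNReal.one_lt_top)
  set N : Set ℝ := {x | Metric.infDist x F ≤ ε} with hN
  have hNm : MeasurableSet N :=
    (isClosed_le (Metric.continuous_infDist_pt F) continuous_const).measurableSet
  set T : Set ℝ := (box \ F) ∩ N with hT
  have hTm : MeasurableSet T := (measurableSet_Icc.diff hFm).inter hNm
  have hTsub : T ⊆ box := fun z hz => hz.1.1
  set r : ℝ≥0∞ := min (ENNReal.ofReal ε) (1 - volume F) with hr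
  have key : r ≤ volume T := by
    by_cases hall : ∀ x ∈ box \ F, Metric.infDist x F ≤ ε
    · have hTeq : T = box \ F := Set.inter_eq_left.mpr fun z hz => hall z hz
      have : volume (box \ F) = 1 - volume F := by
        rw [measure_diff hFsub hFm.nullMeasurableSet hFfin, hboxvol]
      rw [hTeq, this]
      exact min_le_right _ _
    · push_neg at hall
      obtain ⟨x, hxbox, hxd⟩ := hall
      rcases F.eq_empty_or_nonempty with hFe | hFne
      · rw [hFe, Metric.infDist_empty] at hxd
        linarith
      have hxub : x ≤ 1/2 := hxbox.1.2
      have hxlb : -(1:ℝ)/2 ≤ x := hxbox.1.1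
      have hIT : ∃ I : Set ℝ, I ⊆ T ∧ volume I = ENNReal.ofReal ε := by
        by_cases hbelow : (F ∩ Set.Iic x).Nonempty
        · -- take u = sup of F below x
          have hcp : IsCompact (F ∩ Set.Iic x) := hFcp.inter_right isClosed_Iic
          set u : ℝ := sSup (F ∩ Set.Iic x) with hu
          have humem : u ∈ F ∩ Set.Iic x := hcp.sSup_mem hbelow
          have hdu : ε < x - u := by
            have h1 : Metric.infDist x F ≤ dist x u := Metric.infDist_le_dist_of_mem humem.1
            rw [Real.dist_eq, abs_of_nonneg (sub_nonneg.mpr humem.2)] at h1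
            linarith
          refine ⟨Set.Ioc u (u + ε), fun y hy => ?_, by rw [Real.volume_Ioc]; ring_nf⟩
          obtain ⟨hy1, hy2⟩ := hy
          have hyx : y < x := by linarith
          have hynF : y ∉ F := by
            intro hyF
            have : y ≤ u := le_csSup hcp.bddAbove ⟨hyF, hyx.le⟩
            linarith
          refine ⟨⟨⟨?_, ?_⟩, hynF⟩, ?_⟩
          · have := (hFsub humem.1).1; linarith
          · linarith
          · have h1 : Metric.infDist y F ≤ dist y u := Metric.infDist_le_dist_of_mem humem.1
            rw [Real.dist_eq, abs_of_nonneg (by linarith)] at h1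
            simp only [hN, Set.mem_setOf_eq]
            linarith
        · -- F lies entirely above x; take d = inf F
          set d : ℝ := sInf F with hd
          have hdmem : d ∈ F := hFcp.sInf_mem hFne
          have hxd2 : x < d := by
            by_contra h
            exact hbelow ⟨d, hdmem, not_lt.mp h⟩
          have hdx : ε < d - x := by
            have h1 : Metric.infDist x F ≤ dist x d := Metric.infDist_le_dist_of_mem hdmem
            rw [Real.dist_eq, abs_of_nonpos (by linarith)] at h1
            linarith
          refine ⟨Set.Ico (d - ε) d, fun y hy => ?_, by rw [Real.volume_Ico]; ring_nf⟩
          obtain ⟨hy1, hy2⟩ := hy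
          have hynF : y ∉ F := by
            intro hyF
            have : d ≤ y := csInf_le hFcp.bddBelow hyF
            linarith
          refine ⟨⟨⟨?_, ?_⟩, hynF⟩, ?_⟩
          · linarith
          · have := (hFsub hdmem).2; linarith
          · have h1 : Metric.infDist y F ≤ dist y d := Metric.infDist_le_dist_of_mem hdmem
            rw [Real.dist_eq, abs_of_nonpos (by linarith)] at h1
            simp only [hN, Set.mem_setOf_eq]
            linarith
      obtain ⟨I, hIsub, hIvol⟩ := hIT
      calc r ≤ ENNReal.ofReal ε := min_le_left _ _
        _ = volume I := hIvol.symm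
        _ ≤ volume T := measure_mono hIsub
  obtain ⟨S, hST, hSm, hSvol⟩ := exists_subset_volume_eq hTm hTsub r key
  refine ⟨S, hSm, fun z hz => (hST hz).1, fun s hs => (hST hs).2, hSvol⟩
end

section
/- Let f̂ : ℝ → {0,1} and g : ℝ → {0,1} be measurable with f̂·g = 0, supported in [-1/2,1/2], p = ∫ f̂, and ∫ g = min(ε, 1-p) for some 0 ≤ ε ≤ 1. If X ~ Unif[-1,1] and p' = ∫_{-1/2}^{1/2} [f̂(z) + (1-f̂(z))(f̂(z-X) + g(z-X)) ≥ 1] dz, then E[p'] ≥ p + (1/2)(1-p)·min(1, p + ε). -/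
open MeasureTheory

/-- Expected one-step growth bound for the `ε`-perturbed subset-sum coverage fraction:
with `fhat, g` measurable `{0,1}`-valued indicators with disjoint supports contained in
`[-1/2,1/2]`, `p = ∫ fhat`, `∫ g = min ε (1-p)` for `0 ≤ ε ≤ 1`, and the new candidate
`X` uniform on `[-1,1]` (its expectation written as `(1/2) ∫_{-1}^{1} · dx`), the
expected updated coverage `E[p']` is at least `p + (1/2)(1-p) min 1 (p+ε)`. -/
theorem coverage_one_step_expected (fhat g : ℝ → ℝ) (ε p : ℝ)
    (hmf : Measurable fhat) (hmg : Measurable g)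
    (hfhat : ∀ z, fhat z = 0 ∨ fhat z = 1)
    (hg : ∀ z, g z = 0 ∨ g z = 1)
    (hdisj : ∀ z, fhat z * g z = 0)
    (hsuppf : ∀ z, z ∉ Set.Icc (-(1:ℝ)/2) (1/2) → fhat z = 0)
    (hsuppg : ∀ z, z ∉ Set.Icc (-(1:ℝ)/2) (1/2) → g z = 0)
    (hε0 : 0 ≤ ε) (hε1 : ε ≤ 1)
    (hp : p = ∫ z, fhat z)
    (hgint : (∫ z, g z) = min ε (1 - p)) :
    p + (1/2) * (1 - p) * min 1 (p + ε) ≤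
      (1/2) * ∫ x in Set.Icc (-(1:ℝ)) 1,
        (∫ z in Set.Icc (-(1:ℝ)/2) (1/2),
          (if 1 ≤ fhat z + (1 - fhat z) * (fhat (z - x) + g (z - x)) then (1:ℝ) else 0)) := by
  classical
  set I : Set ℝ := Set.Icc (-(1:ℝ)) 1 with hIdef
  set I' : Set ℝ := Set.Icc (-(1:ℝ)/2) (1/2) with hI'def
  set h : ℝ → ℝ := fun z => fhat z + g z with hhdef
  set m : ℝ := min ε (1 - p) with hmdef
  have hmh : Measurable h := hmf.add hmg
  have hh01 : ∀ z, h z = 0 ∨ h z = 1 := by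
    intro z
    rcases hfhat z with h1 | h1 <;> rcases hg z with h2 | h2
    · left; simp [hhdef, h1, h2]
    · right; simp [hhdef, h1, h2]
    · right; simp [hhdef, h1, h2]
    · exfalso; have := hdisj z; rw [h1, h2] at this; norm_num at this
  have hsupph : ∀ z, z ∉ I' → h z = 0 := fun z hz => by
    simp [hhdef, hsuppf z hz, hsuppg z hz]
  -- finite measure instances for restricted measures
  haveI hfinI : IsFiniteMeasure (volume.restrict I) :=
    ⟨by rw [Measure.restrict_apply_univ]; exact measure_Icc_lt_top⟩
  haveI hfinI' : IsFiniteMeasure (volume.restrict I') :=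
    ⟨by rw [Measure.restrict_apply_univ]; exact measure_Icc_lt_top⟩
  -- integrability of bounded functions supported in I'
  have key : ∀ F : ℝ → ℝ, Measurable F → (∀ z, |F z| ≤ 1) → (∀ z, z ∉ I' → F z = 0) →
      Integrable F := by
    intro F hFm hFb hFs
    have hind : Integrable (Set.indicator I' (fun _ => (1:ℝ))) := by
      rw [integrable_indicator_iff measurableSet_Icc]
      exact integrableOn_const measure_Icc_lt_top.ne
    refine hind.mono' hFm.aestronglyMeasurable (ae_of_all _ fun z => ?_)
    by_cases hz : z ∈ I'
    · simpa [Set.indicator_of_mem hz] using hFb z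
    · simp [Set.indicator_of_notMem hz, hFs z hz]
  have habs : ∀ (F : ℝ → ℝ), (∀ z, F z = 0 ∨ F z = 1) → ∀ z, |F z| ≤ 1 := by
    intro F hF z; rcases hF z with h1 | h1 <;> simp [h1]
  have hintf : Integrable fhat := key fhat hmf (habs fhat hfhat) hsuppf
  have hintg : Integrable g := key g hmg (habs g hg) hsuppg
  have hinth : Integrable h := key h hmh (habs h hh01) hsupph
  -- the full integral of h
  have hinth_val : (∫ z, h z) = p + m := by
    simp only [hhdef]
    rw [integral_add hintf hintg, ← hp, hgint, hmdef]
  -- pointwise rewrite of the indicator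
  have hif : ∀ x z, (if 1 ≤ fhat z + (1 - fhat z) * (fhat (z - x) + g (z - x)) then (1:ℝ) else 0)
      = fhat z + (1 - fhat z) * h (z - x) := by
    intro x z
    have hd := hdisj (z - x)
    rcases hfhat z with h1 | h1 <;>
      rcases hfhat (z - x) with h2 | h2 <;>
        rcases hg (z - x) with h3 | h3 <;>
          simp [hhdef, h1, h2, h3] <;> (try norm_num) <;>
          (rw [h2, h3] at hd; norm_num at hd)
  -- volume facts
  have hvolI' : (volume I').toReal = 1 := by
    rw [hI'def, Real.volume_Icc]; norm_num
  have hvolI : (volume I).toReal = 2 := by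
    rw [hIdef, Real.volume_Icc]; norm_num
  -- set integral of fhat over I' is p
  have hpI' : (∫ z in I', fhat z) = p := by
    rw [setIntegral_eq_integral_of_forall_compl_eq_zero hsuppf, ← hp]
  -- translation: for z in I', the inner x-integral of h(z-x) over I is ∫ h
  have htrans : ∀ z ∈ I', (∫ x in I, h (z - x)) = p + m := by
    intro z hz
    have hz' : z ∈ Set.Icc (-(1:ℝ)/2) (1/2) := hz
    rw [setIntegral_eq_integral_of_forall_compl_eq_zero, integral_sub_left_eq_self h volume z,
      hinth_val]
    intro x hx
    apply hsupph
    intro hzx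
    simp only [Set.mem_Icc] at hzx hz'
    exact hx (by rw [hIdef, Set.mem_Icc]; constructor <;> linarith [hzx.1, hzx.2, hz'.1, hz'.2])
  -- product integrability for Fubini
  have hFm : Measurable (Function.uncurry fun (x z : ℝ) => (1 - fhat z) * h (z - x)) := by
    exact (measurable_const.sub (hmf.comp measurable_snd)).mul
      (hmh.comp (measurable_snd.sub measurable_fst))
  have hFint : Integrable (Function.uncurry fun (x z : ℝ) => (1 - fhat z) * h (z - x))
      ((volume.restrict I).prod (volume.restrict I')) := by
    refine (integrable_const (1:ℝ)).mono' hFm.aestronglyMeasurable (ae_of_all _ fun q => ?_)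
    rcases q with ⟨x, z⟩
    simp only [Function.uncurry, Real.norm_eq_abs, abs_mul, abs_one]
    calc |1 - fhat z| * |h (z - x)| ≤ 1 * 1 := by
          apply mul_le_mul _ (habs h hh01 _) (abs_nonneg _) zero_le_one
          rcases hfhat z with h1 | h1 <;> simp [h1]
      _ = 1 := by norm_num
  -- swap the order of integration
  have hswap : (∫ x in I, ∫ z in I', (1 - fhat z) * h (z - x))
      = ∫ z in I', ∫ x in I, (1 - fhat z) * h (z - x) :=
    integral_integral_swap hFint
  -- evaluate the swapped integral
  have hinner_eval : (∫ z in I', ∫ x in I, (1 - fhat z) * h (z - x)) = (1 - p) * (p + m) := by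
    have step1 : (∫ z in I', ∫ x in I, (1 - fhat z) * h (z - x))
        = ∫ z in I', (1 - fhat z) * (p + m) := by
      refine setIntegral_congr_fun measurableSet_Icc (fun z hz => ?_)
      rw [integral_const_mul, htrans z hz]
    rw [step1, integral_mul_const]
    have : (∫ z in I', (1 - fhat z)) = 1 - p := by
      rw [integral_sub (integrable_const 1) hintf.integrableOn, hpI', setIntegral_const]
      rw [measureReal_def, hvolI']; norm_num
    rw [this]
  -- integrability of the inner integral as a function of x
  have hB : Integrable (fun x => ∫ z in I', (1 - fhat z) * h (z - x)) (volume.restrict I) :=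
    hFint.integral_prod_left
  -- rewrite the target integral
  have hmain : (∫ x in I, ∫ z in I', (if 1 ≤ fhat z + (1 - fhat z) * (fhat (z - x) + g (z - x))
        then (1:ℝ) else 0))
      = 2 * p + (1 - p) * (p + m) := by
    have inner_eq : ∀ x : ℝ, (∫ z in I', (if 1 ≤ fhat z + (1 - fhat z) * (fhat (z - x) + g (z - x))
        then (1:ℝ) else 0)) = p + ∫ z in I', (1 - fhat z) * h (z - x) := by
      intro x
      have : (∫ z in I', (if 1 ≤ fhat z + (1 - fhat z) * (fhat (z - x) + g (z - x))
          then (1:ℝ) else 0)) = ∫ z in I', (fhat z + (1 - fhat z) * h (z - x)) := by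
        refine integral_congr_ae (ae_of_all _ fun z => ?_)
        exact hif x z
      rw [this, integral_add hintf.integrableOn, hpI']
      refine (integrable_const (1:ℝ)).mono'
        ((measurable_const.sub hmf).mul (hmh.comp (measurable_id.sub measurable_const))).aestronglyMeasurable
        (ae_of_all _ fun z => ?_)
      simp only [Real.norm_eq_abs, abs_mul, abs_one]
      calc |1 - fhat z| * |h (z - x)| ≤ 1 * 1 := by
            apply mul_le_mul _ (habs h hh01 _) (abs_nonneg _) zero_le_one
            rcases hfhat z with h1 | h1 <;> simp [h1]
        _ = 1 := by norm_num
    calc (∫ x in I, ∫ z in I', (if 1 ≤ fhat z + (1 - fhat z) * (fhat (z - x) + g (z - x))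
          then (1:ℝ) else 0))
        = ∫ x in I, (p + ∫ z in I', (1 - fhat z) * h (z - x)) := by
          exact integral_congr_ae (ae_of_all _ fun x => inner_eq x)
      _ = (∫ _x in I, p) + ∫ x in I, ∫ z in I', (1 - fhat z) * h (z - x) :=
          integral_add (integrable_const p) hB
      _ = 2 * p + (1 - p) * (p + m) := by
          rw [setIntegral_const, hswap, hinner_eval, measureReal_def, hvolI, smul_eq_mul]
  -- arithmetic conclusion
  have hminid : min 1 (p + ε) = p + m := by
    rw [hmdef]
    rcases le_total ε (1 - p) with hle | hle
    · rw [min_eq_left hle, min_eq_right (show p + ε ≤ 1 by linarith)]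
    · rw [min_eq_right hle, min_eq_left (show (1:ℝ) ≤ p + ε by linarith)]; ring
  rw [hmain, hminid]
  apply le_of_eq
  ring
end

section
/- Let 0 ≤ ε ≤ 1 and let real random variables p, p' satisfy p ≤ p' ≤ min(2p + ε, 1) almost surely, p ≤ 1/4, and E[p'] ≥ p + (1/2)(1-p)(p+ε). Then P(p' ≥ (5/4)p + ε/8) ≥ 1/6. -/
open MeasureTheory

/-- Reverse Markov step: if `0 ≤ ε ≤ 1`, `0 ≤ p ≤ 1/4` and the random variable `p'`
satisfies `p ≤ p' ≤ min (2p+ε) 1` almost surely with `E[p'] ≥ p + (1/2)(1-p)(p+ε)`,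
then `P(p' ≥ (5/4)p + ε/8) ≥ 1/6`. -/
theorem reverse_markov_growth {Ω : Type*} [MeasurableSpace Ω]
    (μ : Measure Ω) [IsProbabilityMeasure μ]
    (p ε : ℝ) (p' : Ω → ℝ)
    (hε0 : 0 ≤ ε) (hε1 : ε ≤ 1)
    (hp0 : 0 ≤ p) (hp : p ≤ 1/4)
    (hint : Integrable p' μ)
    (hbound : ∀ᵐ ω ∂μ, p ≤ p' ω ∧ p' ω ≤ min (2 * p + ε) 1)
    (hmean : p + (1/2) * (1 - p) * (p + ε) ≤ ∫ ω, p' ω ∂μ) :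
    ENNReal.ofReal (1/6) ≤ μ {ω | (5/4) * p + ε / 8 ≤ p' ω} := by
  set c : ℝ := (5/4) * p + ε / 8 with hc
  set b : ℝ := min (2 * p + ε) 1 with hb
  -- trivial case p = ε = 0
  by_cases htriv : p + ε = 0
  · have hpz : p = 0 := by linarith [hε0, hp0]
    have hεz : ε = 0 := by linarith
    have hae : ∀ᵐ ω ∂μ, c ≤ p' ω := by
      filter_upwards [hbound] with ω hω
      simp only [hc, hpz, hεz]
      linarith [hω.1]
    have h0 : μ {ω | c ≤ p' ω}ᶜ = 0 := by
      rw [Set.compl_setOf]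
      exact MeasureTheory.ae_iff.mp hae
    have h1 : μ {ω | c ≤ p' ω} = 1 := by
      rw [measure_congr (MeasureTheory.ae_eq_univ.2 h0), measure_univ]
    rw [h1]
    exact le_trans (by norm_num) le_rfl
  · have hpε : 0 < p + ε := lt_of_le_of_ne (by linarith) (Ne.symm htriv)
    have hg := hint.aestronglyMeasurable
    set g : Ω → ℝ := hg.mk p' with hgdef
    have hgm : StronglyMeasurable g := hg.stronglyMeasurable_mk
    have hpg : p' =ᵐ[μ] g := hg.ae_eq_mk
    have hgint : Integrable g μ := hint.congr hpg
    set A : Set Ω := {ω | c ≤ g ω} with hA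
    have hAm : MeasurableSet A := measurableSet_le measurable_const hgm.measurable
    have hsets : μ {ω | c ≤ p' ω} = μ A := by
      apply measure_congr
      filter_upwards [hpg] with ω hω
      show (c ≤ p' ω) = (c ≤ g ω)
      rw [hω]
    set m : ℝ := (μ A).toReal with hm
    have hm0 : 0 ≤ m := ENNReal.toReal_nonneg
    have hμA1 : μ A ≤ 1 := prob_le_one
    have hm1 : m ≤ 1 := by
      rw [hm]
      exact ENNReal.toReal_le_of_le_ofReal zero_le_one (by simpa using hμA1)
    -- the majorant
    set f : Ω → ℝ := A.indicator (fun _ => b) + Aᶜ.indicator (fun _ => c) with hf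
    have hfint : Integrable f μ := by
      apply Integrable.add
      · exact (integrable_const b).indicator hAm
      · exact (integrable_const c).indicator hAm.compl
    have hle : ∀ᵐ ω ∂μ, g ω ≤ f ω := by
      filter_upwards [hbound, hpg] with ω hω hω'
      by_cases hmem : ω ∈ A
      · have : f ω = b := by
          simp [hf, Set.indicator_of_mem hmem, Set.indicator_of_notMem (by simpa using hmem : ω ∉ Aᶜ)]
        rw [this, ← hω']
        exact hω.2
      · have : f ω = c := by
          simp [hf, Set.indicator_of_notMem hmem, Set.indicator_of_mem (Set.mem_compl hmem)]
        rw [this]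
        have : ¬ c ≤ g ω := hmem
        linarith [not_le.mp this]
    have hint_le : ∫ ω, g ω ∂μ ≤ ∫ ω, f ω ∂μ := integral_mono_ae hgint hfint hle
    have hfval : ∫ ω, f ω ∂μ = b * m + c * (1 - m) := by
      rw [hf]
      simp only [Pi.add_apply]
      rw [integral_add ((integrable_const b).indicator hAm) ((integrable_const c).indicator hAm.compl)]
      rw [integral_indicator_const _ hAm, integral_indicator_const _ hAm.compl]
      have hcompl : μ Aᶜ = 1 - μ A := by
        rw [measure_compl hAm (measure_ne_top μ A), measure_univ]
      have : (μ Aᶜ).toReal = 1 - m := by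
        rw [hcompl, ENNReal.toReal_sub_of_le hμA1 ENNReal.one_ne_top, ENNReal.toReal_one]
      rw [measureReal_def, measureReal_def, this, ← hm]
      ring_nf
    have hgval : ∫ ω, g ω ∂μ = ∫ ω, p' ω ∂μ := integral_congr_ae hpg.symm
    have key : p + (1/2) * (1 - p) * (p + ε) ≤ b * m + c * (1 - m) := by
      rw [← hfval]
      calc p + (1/2) * (1 - p) * (p + ε) ≤ ∫ ω, p' ω ∂μ := hmean
        _ = ∫ ω, g ω ∂μ := hgval.symm
        _ ≤ ∫ ω, f ω ∂μ := hint_le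
    -- b - c > 0
    have hbc : c < b := by
      rcases min_cases (2 * p + ε) 1 with ⟨h1, h2⟩ | ⟨h1, h2⟩
      · rw [hb, h1, hc]; nlinarith
      · rw [hb, h1, hc]; nlinarith
    have hble : b ≤ 2 * p + ε := min_le_left _ _
    -- key inequality: (b - c) * m ≥ a - c and 6*(a-c) ≥ b - c
    have hac : (1/8) * p + (1/4) * ε ≤ p + (1/2) * (1 - p) * (p + ε) - c := by
      rw [hc]; nlinarith
    have hbc6 : b - c ≤ 6 * ((1/8) * p + (1/4) * ε) := by
      rw [hc]; nlinarith
    have hmge : 1/6 ≤ m := by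
      have h1 : p + (1/2) * (1 - p) * (p + ε) - c ≤ (b - c) * m := by nlinarith
      nlinarith
    rw [hsets]
    calc ENNReal.ofReal (1/6) ≤ ENNReal.ofReal m := ENNReal.ofReal_le_ofReal hmge
      _ = μ A := ENNReal.ofReal_toReal (measure_ne_top μ A)
end

section
/- Let 0 ≤ ε ≤ 1 and define ψ : (0,1) → ℝ by ψ(p) = (1/(1+ε))(log(p+ε) - log(1-p)) + (16/3)p. If 1/4 ≤ p ≤ p' ≤ min(2p+ε, 1) with p' < 1, then ψ(p') - ψ(p) ≥ (p'-p)/((1-p)(p+ε)). -/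
lemma ptwise (ε p x : ℝ) (hε0 : 0 ≤ ε) (hp : 1/4 ≤ p)
    (hpx : p ≤ x) (hx1 : x < 1) :
    1/((1-p)*(p+ε)) ≤ 1/((x+ε)*(1-x)) + 16/3 := by
  have hp1 : p < 1 := lt_of_le_of_lt hpx hx1
  have hA : 0 < (1-p)*(p+ε) := by nlinarith
  have hB : 0 < (x+ε)*(1-x) := by nlinarith
  rcases le_or_gt (1-ε) (2*p) with h | h
  · have hBA : (x+ε)*(1-x) ≤ (1-p)*(p+ε) := by
      nlinarith [mul_nonneg (sub_nonneg.2 hpx) (sub_nonneg.2 hpx)]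
    have := one_div_le_one_div_of_le hB hBA
    linarith
  · have h3 : 4/(1+ε)^2 ≤ 1/((x+ε)*(1-x)) := by
      rw [div_le_div_iff₀ (by positivity) hB]
      nlinarith [sq_nonneg (x+ε-(1-x))]
    have hAge : (1/4+ε)*((1+ε)/2) ≤ (1-p)*(p+ε) := by nlinarith
    have h1 : 1/((1-p)*(p+ε)) ≤ 1/((1/4+ε)*((1+ε)/2)) :=
      one_div_le_one_div_of_le (by positivity) hAge
    have h2 : 1/((1/4+ε)*((1+ε)/2)) ≤ 4/(1+ε)^2 + 16/3 := by
      rw [div_le_iff₀ (by positivity)]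
      have ht : 4/(1+ε)^2 * (1+ε)^2 = 4 := div_mul_cancel₀ _ (by positivity)
      nlinarith [ht, sq_nonneg (1+ε), sq_nonneg ε,
        div_nonneg (by norm_num : (0:ℝ) ≤ 4) (sq_nonneg (1+ε))]
    linarith

/-- With `ψ(p) = (1/(1+ε))(log(p+ε) - log(1-p)) + (16/3)p`, for `0 ≤ ε ≤ 1` and
`1/4 ≤ p ≤ p' ≤ min (2p+ε) 1` with `p' < 1`, we have
`ψ(p') - ψ(p) ≥ (p'-p)/((1-p)(p+ε))`. -/
theorem psi_growth (ε p p' : ℝ)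
    (hε0 : 0 ≤ ε) (hε1 : ε ≤ 1)
    (hp : 1/4 ≤ p) (hpp' : p ≤ p') (hp'le : p' ≤ min (2 * p + ε) 1) (hp'1 : p' < 1) :
    (p' - p) / ((1 - p) * (p + ε)) ≤
      ((1 / (1 + ε)) * (Real.log (p' + ε) - Real.log (1 - p')) + (16/3) * p') -
        ((1 / (1 + ε)) * (Real.log (p + ε) - Real.log (1 - p)) + (16/3) * p) := by
  set A := (1 - p) * (p + ε) with hAdef
  set F : ℝ → ℝ := fun y =>
    (1 / (1 + ε)) * (Real.log (y + ε) - Real.log (1 - y)) + (16/3) * y - y / A with hFdef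
  have hε : (0:ℝ) < 1 + ε := by linarith
  have hderiv : ∀ x ∈ Set.Icc p p', HasDerivAt F
      ((1 / (1 + ε)) * (1/(x+ε) + 1/(1-x)) + 16/3 - 1/A) x := by
    intro x hx
    have hx0 : 0 < x + ε := by have := hx.1; nlinarith
    have hx1 : 0 < 1 - x := by have := lt_of_le_of_lt hx.2 hp'1; linarith
    have h1 : HasDerivAt (fun y => Real.log (y + ε)) (1/(x+ε)) x := by
      have := ((hasDerivAt_id x).add_const ε).log (ne_of_gt hx0)
      simpa using this
    have h2 : HasDerivAt (fun y => Real.log (1 - y)) (-(1/(1-x))) x := by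
      have := ((hasDerivAt_const x (1:ℝ)).sub (hasDerivAt_id x)).log (ne_of_gt hx1)
      convert this using 1
      · rfl
      · show -(1/(1-x)) = (0-1)/(1-x); ring
    have h3 := (((h1.sub h2).const_mul (1/(1+ε))).add
      ((hasDerivAt_id x).const_mul (16/3))).sub ((hasDerivAt_id x).div_const A)
    exact h3.congr_deriv (by ring)
  have hA : 0 < A := by
    have : p < 1 := lt_of_le_of_lt hpp' hp'1
    apply mul_pos <;> nlinarith
  have hmono : MonotoneOn F (Set.Icc p p') := by
    apply monotoneOn_of_deriv_nonneg (convex_Icc p p')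
    · exact fun x hx => (hderiv x hx).differentiableAt.continuousAt.continuousWithinAt
    · intro x hx
      rw [interior_Icc] at hx
      exact ((hderiv x (Set.mem_Icc_of_Ioo hx)).differentiableAt).differentiableWithinAt
    · intro x hx
      rw [interior_Icc] at hx
      have hxI : x ∈ Set.Icc p p' := Set.mem_Icc_of_Ioo hx
      rw [(hderiv x hxI).deriv]
      have hx0 : 0 < x + ε := by have := hxI.1; nlinarith
      have hx1 : x < 1 := lt_of_le_of_lt hxI.2 hp'1
      have hx1' : 0 < 1 - x := by linarith
      have hsimp : (1 / (1 + ε)) * (1/(x+ε) + 1/(1-x)) = 1/((x+ε)*(1-x)) := by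
        field_simp
        ring
      rw [hsimp]
      have := ptwise ε p x hε0 hp hxI.1 hx1
      linarith
  have hle := hmono (Set.left_mem_Icc.2 hpp') (Set.right_mem_Icc.2 hpp') hpp'
  simp only [hFdef] at hle
  have : (p' - p) / A = p' / A - p / A := by ring
  rw [this]
  linarith
end
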